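/- Let t₁ < t₂ be real numbers and let p₁, p₂, q₁, q₂ : [t₁,t₂] → ℝ be continuous with p₂(t) ≥ p₁(t) > 0 for all t ∈ [t₁,t₂] and q₁(t) ≥ q₂(t) for all t ∈ (t₁,t₂). Suppose there exists a nontrivial solution y of (p₂(t)y'(t))' + q₂(t)y(t) = 0 on (t₁,t₂) with y(t₁) = 0 = y(t₂). Then every real solution x of (p₁(t)x'(t))' + q₁(t)x(t) = 0 which is not a constant multiple of y has at least one zero in the open interval (t₁,t₂). -/

import Mathlib

/-- `x` is a solution of `(p(t) x'(t))' + q(t) x(t) = 0` on `[t₁, t₂]`: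
`x` is continuously differentiable on `[t₁,t₂]`, `t ↦ p(t) x'(t)` is continuously
differentiable on `[t₁,t₂]`, and the equation holds for all `t ∈ [t₁,t₂]`. -/
def IsODESolution (t₁ t₂ : ℝ) (p q x : ℝ → ℝ) : Prop :=
  ContDiffOn ℝ 1 x (Set.Icc t₁ t₂) ∧
  ContDiffOn ℝ 1 (fun t => p t * derivWithin x (Set.Icc t₁ t₂) t) (Set.Icc t₁ t₂) ∧
  ∀ t ∈ Set.Icc t₁ t₂,
    derivWithin (fun τ => p τ * derivWithin x (Set.Icc t₁ t₂) τ) (Set.Icc t₁ t₂) t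
      + q t * x t = 0

/-!
Picone's identity: where `x ≠ 0`, the function `z = y (p₂ y') - (y² / x) (p₁ x')` has derivative
`(p₂ - p₁) y'² + (q₁ - q₂) y² + p₁ (y' - y x' / x)² ≥ 0`. If `x` had no zero in `(t₁, t₂)`, then
`z` would be monotone there and tend to `0` at both endpoints (`y` vanishes there, and a zero of
`x` at an endpoint is simple by uniqueness for the linear equation), so `z ≡ 0`. Then the last
square vanishes, `(y / x)' = 0`, and `y` is a constant multiple of `x`, nonzero since `y ≢ 0`.
-/

open Set Filter Topology NNReal

theorem eqOn_zero_of_hasDerivWithinAt_Icc {E : Type*} [NormedAddCommGroup E] [NormedSpace ℝ E]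
    {v : ℝ → E → E} {K : ℝ≥0} {f : ℝ → E} {a b t₀ : ℝ}
    (hv : ∀ t ∈ Icc a b, LipschitzWith K (v t)) (hv₀ : ∀ t ∈ Icc a b, v t 0 = 0)
    (hf : ContinuousOn f (Icc a b))
    (hf' : ∀ t ∈ Icc a b, HasDerivWithinAt f (v t (f t)) (Icc a b) t)
    (ht₀ : t₀ ∈ Icc a b) (hf₀ : f t₀ = 0) : EqOn f 0 (Icc a b) := by
  have hzero : ∀ t ∈ Icc a b, ∀ s : Set ℝ,
      HasDerivWithinAt (fun _ => (0 : E)) (v t 0) s t := fun t ht s => by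
    simpa [hv₀ t ht] using hasDerivWithinAt_const t s (0 : E)
  have hleft : Ioc a t₀ ⊆ Icc a b := Ioc_subset_Icc_self.trans (Icc_subset_Icc_right ht₀.2)
  have hright : Ico t₀ b ⊆ Icc a b := Ico_subset_Icc_self.trans (Icc_subset_Icc_left ht₀.1)
  rw [← Icc_union_Icc_eq_Icc ht₀.1 ht₀.2]
  refine EqOn.union ?_ ?_
  · exact ODE_solution_unique_of_mem_Icc_left (s := fun _ => univ)
      (fun t ht => (hv t (hleft ht)).lipschitzOnWith) (hf.mono (Icc_subset_Icc_right ht₀.2))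
      (fun t ht => (hf' t (hleft ht)).mono_of_mem_nhdsWithin
        (Icc_mem_nhdsLE_of_mem ⟨ht.1, ht.2.trans ht₀.2⟩))
      (fun _ _ => mem_univ _) continuousOn_const (fun t ht => hzero t (hleft ht) _)
      (fun _ _ => mem_univ _) hf₀
  · exact ODE_solution_unique_of_mem_Icc_right (s := fun _ => univ)
      (fun t ht => (hv t (hright ht)).lipschitzOnWith) (hf.mono (Icc_subset_Icc_left ht₀.1))
      (fun t ht => (hf' t (hright ht)).mono_of_mem_nhdsWithin
        (Icc_mem_nhdsGE_of_mem ⟨ht₀.1.trans ht.1, ht.2⟩))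
      (fun _ _ => mem_univ _) continuousOn_const (fun t ht => hzero t (hright ht) _)
      (fun _ _ => mem_univ _) hf₀

theorem tendsto_sq_div_of_hasDerivWithinAt {f g : ℝ → ℝ} {f' g' e : ℝ} {s : Set ℝ}
    (hf : HasDerivWithinAt f f' s e) (hg : HasDerivWithinAt g g' s e)
    (hfe : f e = 0) (hge : g e = 0) (hg' : g' ≠ 0) :
    Tendsto (fun t => f t ^ 2 / g t) (𝓝[s \ {e}] e) (𝓝 0) := by
  rw [hasDerivWithinAt_iff_tendsto_slope] at hf hg
  have hsub : Tendsto (fun t => t - e) (𝓝[s \ {e}] e) (𝓝 0) :=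
    tendsto_sub_nhds_zero_iff.2 nhdsWithin_le_nhds
  have hlim := ((hf.pow 2).div hg hg').mul hsub
  rw [mul_zero] at hlim
  refine hlim.congr' ?_
  filter_upwards [self_mem_nhdsWithin] with t ht
  have hte : t - e ≠ 0 := sub_ne_zero.2 ht.2
  simp only [Pi.div_apply, slope_def_field, hfe, hge, sub_zero]
  rcases eq_or_ne (g t) 0 with hgt | hgt
  · simp [hgt]
  · field_simp

theorem MonotoneOn.eqOn_zero_of_tendsto {f : ℝ → ℝ} {a b : ℝ} (hf : MonotoneOn f (Ioo a b))
    (ha : Tendsto f (𝓝[>] a) (𝓝 0)) (hb : Tendsto f (𝓝[<] b) (𝓝 0)) :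
    EqOn f 0 (Ioo a b) := fun t ht => by
  refine le_antisymm (ge_of_tendsto hb ?_) (le_of_tendsto ha ?_)
  · filter_upwards [Ioo_mem_nhdsLT ht.2] with s hs
    exact hf ht ⟨ht.1.trans hs.1, hs.2⟩ hs.1.le
  · filter_upwards [Ioo_mem_nhdsGT ht.1] with s hs
    exact hf ⟨hs.1, hs.2.trans ht.2⟩ ht hs.2.le

theorem hasDerivAt_picone {x y X Y : ℝ → ℝ} {t x' y' p₁ p₂ q₁ q₂ : ℝ}
    (hx : HasDerivAt x x' t) (hy : HasDerivAt y y' t)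
    (hX : HasDerivAt X (-(q₁ * x t)) t) (hY : HasDerivAt Y (-(q₂ * y t)) t)
    (hXt : X t = p₁ * x') (hYt : Y t = p₂ * y') (hxt : x t ≠ 0) :
    HasDerivAt (fun s => y s * Y s - y s ^ 2 / x s * X s)
      ((p₂ - p₁) * y' ^ 2 + (q₁ - q₂) * y t ^ 2 + p₁ * (y' - y t * x' / x t) ^ 2) t := by
  refine ((hy.mul hY).sub (((hy.pow 2).div hx hxt).mul hX)).congr_deriv ?_
  simp only [hXt, hYt, Pi.div_apply, Pi.pow_apply]
  field_simp
  ring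

namespace IsODESolution

variable {t₁ t₂ : ℝ} {p q x : ℝ → ℝ}

theorem continuousOn (h : IsODESolution t₁ t₂ p q x) : ContinuousOn x (Icc t₁ t₂) :=
  h.1.continuousOn

theorem continuousOn_flux (h : IsODESolution t₁ t₂ p q x) :
    ContinuousOn (fun t => p t * derivWithin x (Icc t₁ t₂) t) (Icc t₁ t₂) :=
  h.2.1.continuousOn

theorem hasDerivWithinAt (h : IsODESolution t₁ t₂ p q x) {t : ℝ} (ht : t ∈ Icc t₁ t₂) :
    HasDerivWithinAt x (derivWithin x (Icc t₁ t₂) t) (Icc t₁ t₂) t :=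
  (h.1.differentiableOn one_ne_zero t ht).hasDerivWithinAt

theorem hasDerivAt (h : IsODESolution t₁ t₂ p q x) {t : ℝ} (ht : t ∈ Ioo t₁ t₂) :
    HasDerivAt x (derivWithin x (Icc t₁ t₂) t) t :=
  (h.hasDerivWithinAt (Ioo_subset_Icc_self ht)).hasDerivAt (Icc_mem_nhds ht.1 ht.2)

theorem hasDerivWithinAt_flux (h : IsODESolution t₁ t₂ p q x) {t : ℝ} (ht : t ∈ Icc t₁ t₂) :
    HasDerivWithinAt (fun τ => p τ * derivWithin x (Icc t₁ t₂) τ) (-(q t * x t))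
      (Icc t₁ t₂) t := by
  rw [← eq_neg_of_add_eq_zero_left (h.2.2 t ht)]
  exact (h.2.1.differentiableOn one_ne_zero t ht).hasDerivWithinAt

theorem hasDerivAt_flux (h : IsODESolution t₁ t₂ p q x) {t : ℝ} (ht : t ∈ Ioo t₁ t₂) :
    HasDerivAt (fun τ => p τ * derivWithin x (Icc t₁ t₂) τ) (-(q t * x t)) t :=
  (h.hasDerivWithinAt_flux (Ioo_subset_Icc_self ht)).hasDerivAt (Icc_mem_nhds ht.1 ht.2)

-- `(x, p x')` solves a linear first-order system whose coefficients `1 / p` and `-q` are bounded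
-- on `[t₁, t₂]`, so Lipschitz uniqueness applies.
theorem eqOn_zero_of_derivWithin_eq_zero (hp : ContinuousOn p (Icc t₁ t₂))
    (hq : ContinuousOn q (Icc t₁ t₂)) (hppos : ∀ t ∈ Icc t₁ t₂, 0 < p t)
    (h : IsODESolution t₁ t₂ p q x) {t₀ : ℝ} (ht₀ : t₀ ∈ Icc t₁ t₂) (hx₀ : x t₀ = 0)
    (hx₀' : derivWithin x (Icc t₁ t₂) t₀ = 0) : EqOn x 0 (Icc t₁ t₂) := by
  obtain ⟨C, hC⟩ := isCompact_Icc.exists_bound_of_continuousOn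
    ((hp.inv₀ fun t ht => (hppos t ht).ne').prodMk hq.neg)
  have hv : ∀ t ∈ Icc t₁ t₂,
      LipschitzWith C.toNNReal (fun u : ℝ × ℝ => ((p t)⁻¹ * u.2, -q t * u.1)) := by
    intro t ht
    refine (((lipschitzWith_smul (β := ℝ) (p t)⁻¹).comp LipschitzWith.prod_snd).prodMk
      ((lipschitzWith_smul (β := ℝ) (-q t)).comp LipschitzWith.prod_fst)).weaken ?_
    rw [mul_one, mul_one, ← Prod.nnnorm_def ((p t)⁻¹, -q t),
      Real.le_toNNReal_iff_coe_le ((norm_nonneg _).trans (hC t ht))]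
    exact hC t ht
  have hF := eqOn_zero_of_hasDerivWithinAt_Icc hv (fun t _ => by simp)
    (h.continuousOn.prodMk h.continuousOn_flux) (fun t ht => ?_) ht₀ (by simp [hx₀, hx₀'])
  · exact fun t ht => congrArg Prod.fst (hF ht)
  · refine (h.hasDerivWithinAt ht).prodMk (h.hasDerivWithinAt_flux ht) |>.congr_deriv ?_
    simp [(hppos t ht).ne']

end IsODESolution

noncomputable def piconeFunction (t₁ t₂ : ℝ) (p₁ p₂ x y : ℝ → ℝ) (t : ℝ) : ℝ :=
  y t * (p₂ t * derivWithin y (Icc t₁ t₂) t)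
    - y t ^ 2 / x t * (p₁ t * derivWithin x (Icc t₁ t₂) t)

section SturmPicone

variable {t₁ t₂ : ℝ} {p₁ p₂ q₁ q₂ x y : ℝ → ℝ}

theorem hasDerivAt_piconeFunction (hy : IsODESolution t₁ t₂ p₂ q₂ y)
    (hx : IsODESolution t₁ t₂ p₁ q₁ x) {t : ℝ} (ht : t ∈ Ioo t₁ t₂) (hxt : x t ≠ 0) :
    HasDerivAt (piconeFunction t₁ t₂ p₁ p₂ x y)
      ((p₂ t - p₁ t) * derivWithin y (Icc t₁ t₂) t ^ 2 + (q₁ t - q₂ t) * y t ^ 2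
        + p₁ t * (derivWithin y (Icc t₁ t₂) t
          - y t * derivWithin x (Icc t₁ t₂) t / x t) ^ 2) t :=
  hasDerivAt_picone (hx.hasDerivAt ht) (hy.hasDerivAt ht) (hx.hasDerivAt_flux ht)
    (hy.hasDerivAt_flux ht) rfl rfl hxt

theorem monotoneOn_piconeFunction (hppos : ∀ t ∈ Ioo t₁ t₂, 0 < p₁ t)
    (hpp : ∀ t ∈ Ioo t₁ t₂, p₁ t ≤ p₂ t) (hqq : ∀ t ∈ Ioo t₁ t₂, q₂ t ≤ q₁ t)
    (hy : IsODESolution t₁ t₂ p₂ q₂ y) (hx : IsODESolution t₁ t₂ p₁ q₁ x)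
    (hx₀ : ∀ t ∈ Ioo t₁ t₂, x t ≠ 0) :
    MonotoneOn (piconeFunction t₁ t₂ p₁ p₂ x y) (Ioo t₁ t₂) := by
  have hderiv := fun t ht => hasDerivAt_piconeFunction hy hx ht (hx₀ t ht)
  refine monotoneOn_of_deriv_nonneg (convex_Ioo t₁ t₂) (HasDerivAt.continuousOn hderiv)
    (fun t ht => ?_) (fun t ht => ?_) <;> rw [interior_Ioo] at ht
  · exact (hderiv t ht).differentiableAt.differentiableWithinAt
  · rw [(hderiv t ht).deriv]
    have := sub_nonneg.2 (hpp t ht)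
    have := sub_nonneg.2 (hqq t ht)
    have := (hppos t ht).le
    positivity

theorem tendsto_piconeFunction (hy : IsODESolution t₁ t₂ p₂ q₂ y)
    (hx : IsODESolution t₁ t₂ p₁ q₁ x) {e : ℝ} (he : e ∈ Icc t₁ t₂) (hye : y e = 0)
    (hxe : x e ≠ 0 ∨ derivWithin x (Icc t₁ t₂) e ≠ 0) :
    Tendsto (piconeFunction t₁ t₂ p₁ p₂ x y) (𝓝[Icc t₁ t₂ \ {e}] e) (𝓝 0) := by
  have hle : 𝓝[Icc t₁ t₂ \ {e}] e ≤ 𝓝[Icc t₁ t₂] e := nhdsWithin_mono _ sdiff_subset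
  have hsq : Tendsto (fun t => y t ^ 2 / x t) (𝓝[Icc t₁ t₂ \ {e}] e) (𝓝 0) := by
    by_cases hx0 : x e = 0
    · exact tendsto_sq_div_of_hasDerivWithinAt (hy.hasDerivWithinAt he)
        (hx.hasDerivWithinAt he) hye hx0 (hxe.resolve_left (not_not.2 hx0))
    · have h : Tendsto (fun t => y t ^ 2 / x t) (𝓝[Icc t₁ t₂] e) (𝓝 (y e ^ 2 / x e)) :=
        ((hy.continuousOn e he).pow 2).div (hx.continuousOn e he) hx0
      simpa [hye] using h.mono_left hle
  have h : Tendsto (piconeFunction t₁ t₂ p₁ p₂ x y) (𝓝[Icc t₁ t₂ \ {e}] e)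
      (𝓝 (y e * (p₂ e * derivWithin y (Icc t₁ t₂) e) - 0 * (p₁ e * derivWithin x (Icc t₁ t₂) e))) :=
    (((hy.continuousOn e he).mul (hy.continuousOn_flux e he)).mono_left hle).sub
      (hsq.mul ((hx.continuousOn_flux e he).mono_left hle))
  simpa [hye] using h

theorem piconeFunction_eqOn_zero (ht : t₁ < t₂) (hp₁ : ContinuousOn p₁ (Icc t₁ t₂))
    (hq₁ : ContinuousOn q₁ (Icc t₁ t₂)) (hppos : ∀ t ∈ Icc t₁ t₂, 0 < p₁ t)
    (hpp : ∀ t ∈ Ioo t₁ t₂, p₁ t ≤ p₂ t) (hqq : ∀ t ∈ Ioo t₁ t₂, q₂ t ≤ q₁ t)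
    (hy : IsODESolution t₁ t₂ p₂ q₂ y) (hy₁ : y t₁ = 0) (hy₂ : y t₂ = 0)
    (hx : IsODESolution t₁ t₂ p₁ q₁ x) (hx₀ : ∀ t ∈ Ioo t₁ t₂, x t ≠ 0) :
    EqOn (piconeFunction t₁ t₂ p₁ p₂ x y) 0 (Ioo t₁ t₂) := by
  have hsimple : ∀ e ∈ Icc t₁ t₂, x e ≠ 0 ∨ derivWithin x (Icc t₁ t₂) e ≠ 0 := by
    intro e he
    by_contra! h
    obtain ⟨m, hm⟩ := nonempty_Ioo.2 ht
    exact hx₀ m hm (hx.eqOn_zero_of_derivWithin_eq_zero hp₁ hq₁ hppos he h.1 h.2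
      (Ioo_subset_Icc_self hm))
  have hle : ∀ e ∉ Ioo t₁ t₂, 𝓝[Ioo t₁ t₂] e ≤ 𝓝[Icc t₁ t₂ \ {e}] e :=
    fun e he => nhdsWithin_mono _ fun t h => ⟨Ioo_subset_Icc_self h, fun hte => he (hte ▸ h)⟩
  have he₁ : t₁ ∈ Icc t₁ t₂ := left_mem_Icc.2 ht.le
  have he₂ : t₂ ∈ Icc t₁ t₂ := right_mem_Icc.2 ht.le
  refine (monotoneOn_piconeFunction (fun t ht => hppos t (Ioo_subset_Icc_self ht)) hpp hqq hy hx
    hx₀).eqOn_zero_of_tendsto ?_ ?_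
  · rw [← nhdsWithin_Ioo_eq_nhdsGT ht]
    exact (tendsto_piconeFunction hy hx he₁ hy₁ (hsimple _ he₁)).mono_left
      (hle _ fun h => h.1.false)
  · rw [← nhdsWithin_Ioo_eq_nhdsLT ht]
    exact (tendsto_piconeFunction hy hx he₂ hy₂ (hsimple _ he₂)).mono_left
      (hle _ fun h => h.2.false)

theorem exists_eqOn_const_mul_of_piconeFunction_eqOn_zero (hppos : ∀ t ∈ Ioo t₁ t₂, 0 < p₁ t)
    (hpp : ∀ t ∈ Ioo t₁ t₂, p₁ t ≤ p₂ t) (hqq : ∀ t ∈ Ioo t₁ t₂, q₂ t ≤ q₁ t)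
    (hy : IsODESolution t₁ t₂ p₂ q₂ y) (hx : IsODESolution t₁ t₂ p₁ q₁ x)
    (hx₀ : ∀ t ∈ Ioo t₁ t₂, x t ≠ 0) (hz : EqOn (piconeFunction t₁ t₂ p₁ p₂ x y) 0 (Ioo t₁ t₂)) :
    ∃ c, EqOn y (fun t => c * x t) (Ioo t₁ t₂) := by
  have hwronskian : ∀ t ∈ Ioo t₁ t₂,
      derivWithin y (Icc t₁ t₂) t * x t - y t * derivWithin x (Icc t₁ t₂) t = 0 := by
    intro t ht
    have hzt : piconeFunction t₁ t₂ p₁ p₂ x y =ᶠ[𝓝 t] fun _ => 0 :=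
      eventually_of_mem (isOpen_Ioo.mem_nhds ht) hz
    have hG := (hasDerivAt_piconeFunction hy hx ht (hx₀ t ht)).unique
      ((hasDerivAt_const t (0 : ℝ)).congr_of_eventuallyEq hzt)
    set w := derivWithin y (Icc t₁ t₂) t - y t * derivWithin x (Icc t₁ t₂) t / x t with hw
    have h₁ := mul_nonneg (sub_nonneg.2 (hpp t ht)) (sq_nonneg (derivWithin y (Icc t₁ t₂) t))
    have h₂ := mul_nonneg (sub_nonneg.2 (hqq t ht)) (sq_nonneg (y t))
    have h₃ := mul_nonneg (hppos t ht).le (sq_nonneg w)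
    have hw₀ : w = 0 := by
      simpa [(hppos t ht).ne'] using (by linarith : p₁ t * w ^ 2 = 0)
    rw [hw] at hw₀
    field_simp [hx₀ t ht] at hw₀
    linarith
  obtain ⟨c, hc⟩ := isOpen_Ioo.exists_is_const_of_deriv_eq_zero isPreconnected_Ioo
    (f := y / x)
    (fun t ht => ((hy.hasDerivAt ht).div (hx.hasDerivAt ht) (hx₀ t ht)).differentiableAt
      |>.differentiableWithinAt)
    (fun t ht => by
      rw [((hy.hasDerivAt ht).div (hx.hasDerivAt ht) (hx₀ t ht)).deriv, hwronskian t ht,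
        zero_div, Pi.zero_apply])
  refine ⟨c, fun t ht => ?_⟩
  change y t = c * x t
  rw [← hc t ht, Pi.div_apply, div_mul_cancel₀ _ (hx₀ t ht)]

end SturmPicone

theorem sturm_picone_general
    (t₁ t₂ : ℝ) (ht : t₁ < t₂) (p₁ p₂ q₁ q₂ : ℝ → ℝ)
    (hp₁ : ContinuousOn p₁ (Set.Icc t₁ t₂))
    (hq₁ : ContinuousOn q₁ (Set.Icc t₁ t₂))
    (hppos : ∀ t ∈ Set.Icc t₁ t₂, 0 < p₁ t)
    (hpp : ∀ t ∈ Set.Icc t₁ t₂, p₁ t ≤ p₂ t)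
    (hqq : ∀ t ∈ Set.Ioo t₁ t₂, q₂ t ≤ q₁ t)
    (y : ℝ → ℝ) (hy : IsODESolution t₁ t₂ p₂ q₂ y)
    (hynt : ∃ t ∈ Set.Icc t₁ t₂, y t ≠ 0)
    (hy₁ : y t₁ = 0) (hy₂ : y t₂ = 0)
    (x : ℝ → ℝ) (hx : IsODESolution t₁ t₂ p₁ q₁ x)
    (hxy : ¬ ∃ c : ℝ, ∀ t ∈ Set.Icc t₁ t₂, x t = c * y t) :
    ∃ t ∈ Set.Ioo t₁ t₂, x t = 0 := by
  by_contra! hx₀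
  have hpp' : ∀ t ∈ Ioo t₁ t₂, p₁ t ≤ p₂ t := fun t ht => hpp t (Ioo_subset_Icc_self ht)
  obtain ⟨c, hc⟩ := exists_eqOn_const_mul_of_piconeFunction_eqOn_zero
    (fun t ht => hppos t (Ioo_subset_Icc_self ht)) hpp' hqq hy hx hx₀
    (piconeFunction_eqOn_zero ht hp₁ hq₁ hppos hpp' hqq hy hy₁ hy₂ hx hx₀)
  have hyx : EqOn y (fun t => c * x t) (Icc t₁ t₂) :=
    hc.of_subset_closure hy.continuousOn (continuousOn_const.mul hx.continuousOn)
      Ioo_subset_Icc_self (closure_Ioo ht.ne).ge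
  have hc₀ : c ≠ 0 := by
    rintro rfl
    obtain ⟨t, ht, hyt⟩ := hynt
    exact hyt (by simpa using hyx ht)
  exact hxy ⟨c⁻¹, fun t ht => by rw [hyx ht, inv_mul_cancel_left₀ hc₀]⟩

/-- **Sturm–Picone comparison theorem.** -/
theorem sturm_picone
    (t₁ t₂ : ℝ) (ht : t₁ < t₂) (p₁ p₂ q₁ q₂ : ℝ → ℝ)
    (hp₁ : ContinuousOn p₁ (Set.Icc t₁ t₂))
    (hp₂ : ContinuousOn p₂ (Set.Icc t₁ t₂))
    (hq₁ : ContinuousOn q₁ (Set.Icc t₁ t₂))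
    (hq₂ : ContinuousOn q₂ (Set.Icc t₁ t₂))
    (hppos : ∀ t ∈ Set.Icc t₁ t₂, 0 < p₁ t)
    (hpp : ∀ t ∈ Set.Icc t₁ t₂, p₁ t ≤ p₂ t)
    (hqq : ∀ t ∈ Set.Ioo t₁ t₂, q₂ t ≤ q₁ t)
    (y : ℝ → ℝ) (hy : IsODESolution t₁ t₂ p₂ q₂ y)
    (hynt : ∃ t ∈ Set.Icc t₁ t₂, y t ≠ 0)
    (hy₁ : y t₁ = 0) (hy₂ : y t₂ = 0)
    (x : ℝ → ℝ) (hx : IsODESolution t₁ t₂ p₁ q₁ x)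
    (hxy : ¬ ∃ c : ℝ, ∀ t ∈ Set.Icc t₁ t₂, x t = c * y t) :
    ∃ t ∈ Set.Ioo t₁ t₂, x t = 0 :=
  sturm_picone_general t₁ t₂ ht p₁ p₂ q₁ q₂ hp₁ hq₁ hppos hpp hqq y hy hynt hy₁ hy₂ x hx hxy
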